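/- arXiv:0804.1579 — 8 statements merged into one kernel-verified Lean document; each statement's English description precedes it below -/
import Mathlib

section
/- Let $m_1,\dots,m_n$ be nonnegative real numbers with $M = \max_i m_i = 1$, and let $l$ be the number of indices $i$ with $m_i = 1$. Then there exist constants $C, C' > 0$ such that for all sufficiently small $\delta \in (0,1)$, $C\,|\ln\delta|^{l}\,\delta \le \int_{\{x \in (0,1)^n : \delta/(x_1^{m_1}\cdots x_n^{m_n}) < 1\}} \frac{\delta}{x_1^{m_1}\cdots x_n^{m_n}}\,dx \le C'\,|\ln\delta|^{l}\,\delta$. -/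
/-!
Write the integrand as `δ * ∏ i, x i ^ (-m i)`. On the region it is below `1`, so it is at most
its `(1 - a)`-th power `δ ^ (1 - a) * ∏ i, x i ^ (-(1 - a) * m i)`, whose integral over the whole
cube factors as `δ ^ (1 - a) * ∏ i, (1 - (1 - a) * m i)⁻¹`. Taking `a = 1 / |log δ|` gives
`δ ^ (1 - a) = e * δ`, and every coordinate with `m i = 1` contributes a factor `|log δ|`.

Conversely, the cube `(ε, 1) ^ n` with `ε = δ ^ (1 / (2n + 2))` lies in the region, and there the
integral factors again: a coordinate with `m i = 1` contributes `∫_ε^1 dt / t = |log δ| / (2n + 2)`,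
any other at least `1 / 2`.
-/

open MeasureTheory Set Real

section Product

variable {ι : Type*} [Fintype ι]

theorem setIntegral_univ_pi_prod (f : ι → ℝ → ℝ) (s : ι → Set ℝ) :
    ∫ x in univ.pi s, ∏ i, f i (x i) = ∏ i, ∫ t in s i, f i t := by
  rw [volume_pi, Measure.restrict_pi_pi, integral_fintype_prod_eq_prod]

theorem IntegrableOn.univ_pi_prod {f : ι → ℝ → ℝ} {s : ι → Set ℝ}
    (hf : ∀ i, IntegrableOn (f i) (s i)) :
    IntegrableOn (fun x : ι → ℝ => ∏ i, f i (x i)) (univ.pi s) := by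
  rw [IntegrableOn, volume_pi, Measure.restrict_pi_pi]
  exact Integrable.fintype_prod hf

end Product

section CoordinateIntegrals

variable {ι : Type*} [Fintype ι] {m : ι → ℝ}

theorem integral_Ioo_zero_one_rpow {r : ℝ} (hr : -1 < r) :
    ∫ t in Ioo (0 : ℝ) 1, t ^ r = (r + 1)⁻¹ := by
  rw [← integral_Ioc_eq_integral_Ioo, ← intervalIntegral.integral_of_le zero_le_one,
    integral_rpow (Or.inl hr), one_rpow, zero_rpow (by linarith), sub_zero, one_div]

theorem integrableOn_Ioo_rpow_of_pos {a b : ℝ} (ha : 0 < a) (hab : a ≤ b) (r : ℝ) :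
    IntegrableOn (fun t : ℝ => t ^ r) (Ioo a b) := by
  rw [← intervalIntegrable_iff_integrableOn_Ioo_of_le hab]
  exact intervalIntegral.intervalIntegrable_rpow (Or.inr (notMem_uIcc_of_lt ha (ha.trans_le hab)))

theorem integral_Ioo_rpow_neg_one {ε : ℝ} (hε : 0 < ε) (hε1 : ε ≤ 1) :
    ∫ t in Ioo ε 1, t ^ (-1 : ℝ) = -log ε := by
  simp only [rpow_neg_one]
  rw [← integral_Ioc_eq_integral_Ioo, ← intervalIntegral.integral_of_le hε1,
    integral_inv (notMem_uIcc_of_lt hε one_pos), one_div, log_inv]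

theorem half_le_integral_Ioo_rpow_neg {ε s : ℝ} (hε : 0 < ε) (hε2 : ε ≤ 1 / 2) (hs : 0 ≤ s) :
    1 / 2 ≤ ∫ t in Ioo ε 1, t ^ (-s) := by
  have hε1 : ε ≤ 1 := by linarith
  calc 1 / 2 ≤ 1 - ε := by linarith
    _ = ∫ _ in Ioo ε 1, (1 : ℝ) := by simp [hε1]
    _ ≤ ∫ t in Ioo ε 1, t ^ (-s) :=
      setIntegral_mono_on (integrableOn_const measure_Ioo_lt_top.ne)
        (integrableOn_Ioo_rpow_of_pos hε hε1 _) measurableSet_Ioo fun t ht =>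
          one_le_rpow_of_pos_of_le_one_of_nonpos (hε.trans ht.1) ht.2.le (by linarith)

theorem le_prod_integral_Ioo_rpow_neg (hm0 : ∀ i, 0 ≤ m i) {ε : ℝ} (hε : 0 < ε)
    (hε2 : ε ≤ 1 / 2) :
    (-log ε) ^ (Finset.univ.filter (m · = 1)).card * (1 / 2) ^ Fintype.card ι
      ≤ ∏ i, ∫ t in Ioo ε 1, t ^ (-m i) := by
  rw [← Finset.prod_filter_mul_prod_filter_not Finset.univ (m · = 1)]
  have hlog : 0 ≤ -log ε := neg_nonneg.2 (log_nonpos hε.le (by linarith))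
  have hone : ∏ i ∈ Finset.univ.filter (m · = 1), ∫ t in Ioo ε 1, t ^ (-m i)
      = (-log ε) ^ (Finset.univ.filter (m · = 1)).card := by
    rw [← Finset.prod_const]
    refine Finset.prod_congr rfl fun i hi => ?_
    rw [(Finset.mem_filter.1 hi).2, integral_Ioo_rpow_neg_one hε (by linarith)]
  have hrest : (1 / 2 : ℝ) ^ Fintype.card ι
      ≤ ∏ i ∈ Finset.univ.filter (¬ m · = 1), ∫ t in Ioo ε 1, t ^ (-m i) :=
    calc (1 / 2 : ℝ) ^ Fintype.card ι ≤ (1 / 2) ^ (Finset.univ.filter (¬ m · = 1)).card :=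
          pow_le_pow_of_le_one (by norm_num) (by norm_num) (Finset.card_filter_le _ _)
      _ ≤ _ := by
          rw [← Finset.prod_const]
          exact Finset.prod_le_prod (fun _ _ => by norm_num)
            fun i _ => half_le_integral_Ioo_rpow_neg hε hε2 (hm0 i)
  rw [hone]
  exact mul_le_mul_of_nonneg_left hrest (pow_nonneg hlog _)

theorem prod_inv_one_sub_mul_le (hm0 : ∀ i, 0 ≤ m i) (hm1 : ∀ i, m i ≤ 1) {a : ℝ} (ha : 0 < a) :
    ∏ i, (1 - (1 - a) * m i)⁻¹
      ≤ a⁻¹ ^ (Finset.univ.filter (m · = 1)).card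
        * ∏ i ∈ Finset.univ.filter (m · < 1), (1 - m i)⁻¹ := by
  rw [← Finset.prod_filter_mul_prod_filter_not Finset.univ (m · = 1),
    Finset.filter_congr fun i _ => (hm1 i).lt_iff_ne.symm]
  have hone : ∏ i ∈ Finset.univ.filter (m · = 1), (1 - (1 - a) * m i)⁻¹
      = a⁻¹ ^ (Finset.univ.filter (m · = 1)).card := by
    rw [← Finset.prod_const]
    refine Finset.prod_congr rfl fun i hi => ?_
    rw [(Finset.mem_filter.1 hi).2]
    ring
  have hrest : ∏ i ∈ Finset.univ.filter (m · < 1), (1 - (1 - a) * m i)⁻¹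
      ≤ ∏ i ∈ Finset.univ.filter (m · < 1), (1 - m i)⁻¹ := by
    refine Finset.prod_le_prod (fun i hi => ?_) fun i hi => ?_ <;>
      have hmi := (Finset.mem_filter.1 hi).2
    · exact inv_nonneg.2 (by nlinarith [hm0 i])
    · exact inv_anti₀ (by linarith) (by nlinarith [hm0 i])
  rw [hone]
  exact mul_le_mul_of_nonneg_left hrest (by positivity)

end CoordinateIntegrals

section Region

variable {ι : Type*} [Fintype ι] (m : ι → ℝ) (δ : ℝ)

def monomialSuperlevel : Set (ι → ℝ) :=
  {x | (∀ i, x i ∈ Ioo (0 : ℝ) 1) ∧ δ / ∏ i, x i ^ m i < 1}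

theorem measurableSet_monomialSuperlevel : MeasurableSet (monomialSuperlevel m δ) := by
  unfold monomialSuperlevel
  measurability

theorem monomialSuperlevel_subset_cube :
    monomialSuperlevel m δ ⊆ univ.pi fun _ => Ioo (0 : ℝ) 1 :=
  fun _ hx i _ => hx.1 i

variable {m δ}

theorem div_prod_rpow_eq_mul_prod_rpow_neg {x : ι → ℝ} (hx : ∀ i, 0 < x i) :
    δ / ∏ i, x i ^ m i = δ * ∏ i, x i ^ (-m i) := by
  simp only [rpow_neg (hx _).le, Finset.prod_inv_distrib, div_eq_mul_inv]

theorem univ_pi_Ioo_subset_monomialSuperlevel (hm1 : ∀ i, m i ≤ 1) {ε : ℝ} (hε : 0 < ε)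
    (hδε : δ < ε ^ Fintype.card ι) :
    (univ.pi fun _ => Ioo ε 1) ⊆ monomialSuperlevel m δ := by
  intro x hx
  have hx0 : ∀ i, 0 < x i := fun i => hε.trans (hx i (mem_univ i)).1
  have hεx : ε ^ Fintype.card ι ≤ ∏ i, x i ^ m i := by
    rw [← Finset.card_univ, ← Finset.prod_const]
    refine Finset.prod_le_prod (fun _ _ => hε.le) fun i _ => ?_
    calc ε ≤ x i := (hx i (mem_univ i)).1.le
      _ = x i ^ (1 : ℝ) := (rpow_one _).symm
      _ ≤ x i ^ m i := rpow_le_rpow_of_exponent_ge (hx0 i) (hx i (mem_univ i)).2.le (hm1 i)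
  refine ⟨fun i => ⟨hx0 i, (hx i (mem_univ i)).2⟩, ?_⟩
  rw [div_lt_one (Finset.prod_pos fun i _ => rpow_pos_of_pos (hx0 i) _)]
  exact hδε.trans_le hεx

theorem mul_prod_rpow_neg_mem_Ico_of_mem_monomialSuperlevel (hδ : 0 ≤ δ) {x : ι → ℝ}
    (hx : x ∈ monomialSuperlevel m δ) : δ * ∏ i, x i ^ (-m i) ∈ Ico 0 1 := by
  have hx0 : ∀ i, 0 < x i := fun i => (hx.1 i).1
  refine ⟨mul_nonneg hδ (Finset.prod_nonneg fun i _ => (rpow_pos_of_pos (hx0 i) _).le), ?_⟩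
  rw [← div_prod_rpow_eq_mul_prod_rpow_neg hx0]
  exact hx.2

theorem mul_prod_rpow_neg_le_of_mem_monomialSuperlevel (hδ : 0 < δ) {a : ℝ} (ha : 0 ≤ a)
    {x : ι → ℝ} (hx : x ∈ monomialSuperlevel m δ) :
    δ * ∏ i, x i ^ (-m i) ≤ δ ^ (1 - a) * ∏ i, x i ^ (-((1 - a) * m i)) := by
  have hx0 : ∀ i, 0 < x i := fun i => (hx.1 i).1
  obtain ⟨hu0, hu1⟩ := mul_prod_rpow_neg_mem_Ico_of_mem_monomialSuperlevel hδ.le hx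
  calc δ * ∏ i, x i ^ (-m i) ≤ (δ * ∏ i, x i ^ (-m i)) ^ (1 - a) :=
        self_le_rpow_of_le_one hu0 hu1.le (by linarith)
    _ = δ ^ (1 - a) * ∏ i, x i ^ (-((1 - a) * m i)) := by
        rw [mul_rpow hδ.le (Finset.prod_nonneg fun i _ => (rpow_pos_of_pos (hx0 i) _).le),
          ← finsetProd_rpow _ _ fun i _ => (rpow_pos_of_pos (hx0 i) _).le]
        congr 1
        refine Finset.prod_congr rfl fun i _ => ?_
        rw [← rpow_mul (hx0 i).le]
        ring_nf

theorem integrableOn_monomialSuperlevel (hδ : 0 < δ) :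
    IntegrableOn (fun x : ι → ℝ => δ * ∏ i, x i ^ (-m i)) (monomialSuperlevel m δ) := by
  refine Measure.integrableOn_of_bounded (M := 1)
    ((measure_mono (monomialSuperlevel_subset_cube m δ)).trans_lt ?_).ne
    (by fun_prop : Measurable fun x : ι → ℝ => δ * ∏ i, x i ^ (-m i)).aestronglyMeasurable ?_
  · simp [volume_pi_pi, Real.volume_Ioo]
  · filter_upwards [ae_restrict_mem (measurableSet_monomialSuperlevel m δ)] with x hx
    obtain ⟨hu0, hu1⟩ := mul_prod_rpow_neg_mem_Ico_of_mem_monomialSuperlevel hδ.le hx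
    rw [Real.norm_of_nonneg hu0]
    exact hu1.le

theorem setIntegral_monomialSuperlevel_le (hm0 : ∀ i, 0 ≤ m i) (hm1 : ∀ i, m i ≤ 1) (hδ : 0 < δ)
    {a : ℝ} (ha : 0 < a) :
    ∫ x in monomialSuperlevel m δ, δ * ∏ i, x i ^ (-m i)
      ≤ δ ^ (1 - a) * ∏ i, (1 - (1 - a) * m i)⁻¹ := by
  have hexp : ∀ i, -1 < -((1 - a) * m i) := fun i => by
    rcases le_total a 1 with h | h <;> nlinarith [hm0 i, hm1 i]
  have hint : IntegrableOn (fun x : ι → ℝ => δ ^ (1 - a) * ∏ i, x i ^ (-((1 - a) * m i)))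
      (univ.pi fun _ => Ioo 0 1) :=
    Integrable.const_mul (IntegrableOn.univ_pi_prod fun i =>
      (intervalIntegral.integrableOn_Ioo_rpow_iff one_pos).2 (hexp i)) _
  calc ∫ x in monomialSuperlevel m δ, δ * ∏ i, x i ^ (-m i)
      ≤ ∫ x in monomialSuperlevel m δ, δ ^ (1 - a) * ∏ i, x i ^ (-((1 - a) * m i)) :=
        setIntegral_mono_on (integrableOn_monomialSuperlevel hδ)
          (hint.mono_set (monomialSuperlevel_subset_cube m δ))
          (measurableSet_monomialSuperlevel m δ)
          fun x hx => mul_prod_rpow_neg_le_of_mem_monomialSuperlevel hδ ha.le hx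
    _ ≤ ∫ x in univ.pi fun _ => Ioo 0 1, δ ^ (1 - a) * ∏ i, x i ^ (-((1 - a) * m i)) := by
        refine setIntegral_mono_set hint ?_ (monomialSuperlevel_subset_cube m δ).eventuallyLE
        filter_upwards [ae_restrict_mem (MeasurableSet.univ_pi fun _ => measurableSet_Ioo)]
          with x hx
        exact mul_nonneg (rpow_nonneg hδ.le _)
          (Finset.prod_nonneg fun i _ => rpow_nonneg (hx i (mem_univ i)).1.le _)
    _ = δ ^ (1 - a) * ∏ i, (1 - (1 - a) * m i)⁻¹ := by
        rw [integral_const_mul, setIntegral_univ_pi_prod fun i t => t ^ (-((1 - a) * m i))]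
        congr 1
        refine Finset.prod_congr rfl fun i _ => ?_
        rw [integral_Ioo_zero_one_rpow (hexp i)]
        ring_nf

theorem le_setIntegral_monomialSuperlevel (hm0 : ∀ i, 0 ≤ m i) (hm1 : ∀ i, m i ≤ 1)
    (hδ : 0 < δ) {ε : ℝ} (hε : 0 < ε) (hε2 : ε ≤ 1 / 2) (hδε : δ < ε ^ Fintype.card ι) :
    δ * ((-log ε) ^ (Finset.univ.filter (m · = 1)).card * (1 / 2) ^ Fintype.card ι)
      ≤ ∫ x in monomialSuperlevel m δ, δ * ∏ i, x i ^ (-m i) :=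
  calc δ * ((-log ε) ^ (Finset.univ.filter (m · = 1)).card * (1 / 2) ^ Fintype.card ι)
      ≤ δ * ∏ i, ∫ t in Ioo ε 1, t ^ (-m i) :=
        mul_le_mul_of_nonneg_left (le_prod_integral_Ioo_rpow_neg hm0 hε hε2) hδ.le
    _ = ∫ x in univ.pi fun _ => Ioo ε 1, δ * ∏ i, x i ^ (-m i) := by
        rw [integral_const_mul, setIntegral_univ_pi_prod fun i t => t ^ (-m i)]
    _ ≤ ∫ x in monomialSuperlevel m δ, δ * ∏ i, x i ^ (-m i) := by
        refine setIntegral_mono_set (integrableOn_monomialSuperlevel hδ) ?_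
          (univ_pi_Ioo_subset_monomialSuperlevel hm1 hε hδε).eventuallyLE
        filter_upwards [ae_restrict_mem (measurableSet_monomialSuperlevel m δ)] with x hx
        exact (mul_prod_rpow_neg_mem_Ico_of_mem_monomialSuperlevel hδ.le hx).1

end Region

section Asymptotics

variable {ι : Type*} [Fintype ι] {m : ι → ℝ} {δ : ℝ}

theorem setIntegral_monomialSuperlevel_le_mul_log_pow (hm0 : ∀ i, 0 ≤ m i)
    (hm1 : ∀ i, m i ≤ 1) (hδ : 0 < δ) (hδ1 : δ < 1) :
    ∫ x in monomialSuperlevel m δ, δ * ∏ i, x i ^ (-m i)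
      ≤ (exp 1 * ∏ i ∈ Finset.univ.filter (m · < 1), (1 - m i)⁻¹)
        * (-log δ) ^ (Finset.univ.filter (m · = 1)).card * δ := by
  have hL : 0 < -log δ := neg_pos.2 (log_neg hδ hδ1)
  have hpow : δ ^ (1 - (-log δ)⁻¹) = exp 1 * δ := by
    have hexp : log δ * (1 - (-log δ)⁻¹) = 1 + log δ := by
      rw [mul_sub, mul_one, inv_neg, mul_neg, mul_inv_cancel₀ (neg_ne_zero.1 hL.ne')]
      ring
    rw [rpow_def_of_pos hδ, hexp, exp_add, exp_log hδ]
  calc ∫ x in monomialSuperlevel m δ, δ * ∏ i, x i ^ (-m i)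
      ≤ δ ^ (1 - (-log δ)⁻¹) * ∏ i, (1 - (1 - (-log δ)⁻¹) * m i)⁻¹ :=
        setIntegral_monomialSuperlevel_le hm0 hm1 hδ (inv_pos.2 hL)
    _ ≤ δ ^ (1 - (-log δ)⁻¹) * ((-log δ)⁻¹⁻¹ ^ (Finset.univ.filter (m · = 1)).card
          * ∏ i ∈ Finset.univ.filter (m · < 1), (1 - m i)⁻¹) :=
        mul_le_mul_of_nonneg_left (prod_inv_one_sub_mul_le hm0 hm1 (inv_pos.2 hL))
          (rpow_nonneg hδ.le _)
    _ = _ := by rw [hpow, inv_inv]; ring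

theorem mul_log_pow_le_setIntegral_monomialSuperlevel (hm0 : ∀ i, 0 ≤ m i)
    (hm1 : ∀ i, m i ≤ 1) (hδ : 0 < δ) (hδ₀ : δ < exp (-(2 * Fintype.card ι + 2))) :
    (1 / 2) ^ Fintype.card ι / (2 * Fintype.card ι + 2) ^ (Finset.univ.filter (m · = 1)).card
        * (-log δ) ^ (Finset.univ.filter (m · = 1)).card * δ
      ≤ ∫ x in monomialSuperlevel m δ, δ * ∏ i, x i ^ (-m i) := by
  set N : ℝ := 2 * Fintype.card ι + 2
  have hN : 0 < N := by positivity
  have hlogδ : log δ < -N := (log_lt_iff_lt_exp hδ).2 hδ₀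
  set ε := exp (log δ / N)
  have hlogε : -log ε = -log δ / N := by rw [log_exp, neg_div]
  have hε2 : ε ≤ 1 / 2 :=
    (exp_lt_exp.2 ((div_lt_iff₀ hN).2 (by linarith))).le.trans exp_neg_one_lt_half.le
  have hδε : δ < ε ^ Fintype.card ι := by
    rw [← exp_nat_mul]
    conv_lhs => rw [← exp_log hδ]
    refine exp_lt_exp.2 ?_
    rw [mul_div_assoc', lt_div_iff₀ hN]
    nlinarith
  calc (1 / 2) ^ Fintype.card ι / N ^ (Finset.univ.filter (m · = 1)).card
        * (-log δ) ^ (Finset.univ.filter (m · = 1)).card * δ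
      = δ * ((-log ε) ^ (Finset.univ.filter (m · = 1)).card * (1 / 2) ^ Fintype.card ι) := by
        rw [hlogε, div_pow]; ring
    _ ≤ _ := le_setIntegral_monomialSuperlevel hm0 hm1 hδ (exp_pos _) hε2 hδε

end Asymptotics

/-- Lemma 3.1(c): when `M = max m i = 1` and `l` of the `m i` equal `1`, the integral of
`δ / x^m` over the region of the unit cube where `δ / x^m < 1` is comparable to
`|ln δ|^l · δ` for sufficiently small `δ`. -/
theorem stmt2 {n : ℕ} (m : Fin n → ℝ) (hm : ∀ i, 0 ≤ m i)
    (M : ℝ) (hM : IsGreatest (Set.range m) M) (hM1 : M = 1)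
    (l : ℕ) (hl : l = {i : Fin n | m i = 1}.ncard) :
    ∃ C C' : ℝ, 0 < C ∧ 0 < C' ∧ ∃ δ₀ : ℝ, 0 < δ₀ ∧ δ₀ < 1 ∧ ∀ δ : ℝ, 0 < δ → δ < δ₀ →
      C * |Real.log δ| ^ l * δ ≤ (∫ x in {x : Fin n → ℝ | (∀ i, x i ∈ Set.Ioo (0:ℝ) 1) ∧
                  δ / ∏ i, x i ^ m i < 1}, δ / ∏ i, x i ^ m i) ∧
      (∫ x in {x : Fin n → ℝ | (∀ i, x i ∈ Set.Ioo (0:ℝ) 1) ∧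
                  δ / ∏ i, x i ^ m i < 1}, δ / ∏ i, x i ^ m i) ≤ C' * |Real.log δ| ^ l * δ := by
  have hm1 : ∀ i, m i ≤ 1 := fun i => hM1 ▸ hM.2 (mem_range_self i)
  have hl' : l = (Finset.univ.filter (m · = 1)).card := by
    rw [hl, ← Set.ncard_coe_finset, Finset.coe_filter_univ]
  have hδ₀ : exp (-(2 * n + 2)) < 1 := exp_lt_one_iff.2 (by linarith [n.cast_nonneg (α := ℝ)])
  refine ⟨(1 / 2) ^ n / (2 * n + 2) ^ l, exp 1 * ∏ i ∈ Finset.univ.filter (m · < 1), (1 - m i)⁻¹,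
    by positivity, mul_pos (exp_pos 1) (Finset.prod_pos fun i hi =>
      inv_pos.2 (sub_pos.2 (Finset.mem_filter.1 hi).2)), _, exp_pos _, hδ₀, fun δ hδ hδδ₀ => ?_⟩
  have hδ1 : δ < 1 := hδδ₀.trans hδ₀
  have hintegrand : ∫ x in monomialSuperlevel m δ, δ / ∏ i, x i ^ m i
      = ∫ x in monomialSuperlevel m δ, δ * ∏ i, x i ^ (-m i) :=
    setIntegral_congr_fun (measurableSet_monomialSuperlevel m δ) fun x hx =>
      div_prod_rpow_eq_mul_prod_rpow_neg fun i => (hx.1 i).1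
  change _ ≤ ∫ x in monomialSuperlevel m δ, _ ∧ ∫ x in monomialSuperlevel m δ, _ ≤ _
  rw [hintegrand, abs_of_neg (log_neg hδ hδ1)]
  have hlower := mul_log_pow_le_setIntegral_monomialSuperlevel hm hm1 hδ
  simp only [Fintype.card_fin] at hlower
  subst hl'
  exact ⟨hlower hδδ₀, setIntegral_monomialSuperlevel_le_mul_log_pow hm hm1 hδ hδ1⟩
end

section
/- Let $m_1,\dots,m_n$ be nonnegative real numbers with $M = \max_i m_i > 1$. Then there exists a constant $C' > 0$ such that for all $0 < \delta < 1$, $\int_{\{x \in (0,1)^n : \delta/(x_1^{m_1}\cdots x_n^{m_n}) < 1\}} \frac{\delta}{x_1^{m_1}\cdots x_n^{m_n}}\,dx \le C'\,|\{x \in (0,1)^n : x_1^{m_1}\cdots x_n^{m_n} < \delta\}|$. -/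
/-!
By the layer-cake formula, the integral of `g = δ / x^m` over `{g < 1}` is `∫₀¹ |{g > t}| dt`,
and `{g > t} ⊆ {x^m < δ / t}`. Shrinking a coordinate `i₀` with `m i₀ = M` by the factor
`c = t ^ (1 / M)` maps `{x^m < δ / t}` into `{x^m < δ}` and multiplies volumes by `c`, so
`|{x^m < δ / t}| ≤ t ^ (-1 / M) |{x^m < δ}|`. Since `M > 1`, `t ^ (-1 / M)` is integrable on
`(0, 1]`, with integral `M / (M - 1)`.
-/

open MeasureTheory Set Real

lemma integral_le_setIntegral_Ioc_of_measureReal_lt_le {α : Type*} [MeasurableSpace α]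
    {μ : Measure α} [IsFiniteMeasure μ] {g : α → ℝ} (hg : AEStronglyMeasurable g μ)
    (hg0 : 0 ≤ᵐ[μ] g) (hg1 : ∀ᵐ x ∂μ, g x ≤ 1) {φ : ℝ → ℝ} (hφ : IntegrableOn φ (Ioc 0 1))
    (hgφ : ∀ t ∈ Ioc (0 : ℝ) 1, μ.real {x | t < g x} ≤ φ t) :
    ∫ x, g x ∂μ ≤ ∫ t in Ioc 0 1, φ t := by
  have hint : Integrable g μ := .of_bound hg 1 <| by
    filter_upwards [hg0, hg1] with x h0 h1
    rwa [Real.norm_of_nonneg h0]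
  have hanti : Antitone fun t => μ.real {x | t < g x} :=
    fun s t hst => measureReal_mono fun x hx => hst.trans_lt hx
  have hvanish : ∀ t ∈ Ioi 0 \ Ioc 0 1, μ.real {x | t < g x} = 0 := by
    rintro t ⟨ht0, ht⟩
    have ht1 : 1 < t := lt_of_not_ge fun h => ht ⟨ht0, h⟩
    rw [measureReal_eq_zero_iff]
    exact measure_mono_null (fun x hx => not_le.2 (ht1.trans hx)) (ae_iff.1 hg1)
  rw [hint.integral_eq_integral_meas_lt hg0,
    setIntegral_eq_of_subset_of_forall_sdiff_eq_zero measurableSet_Ioi Ioc_subset_Ioi_self hvanish]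
  exact setIntegral_mono_on ((hanti.antitoneOn _).integrableOn_isCompact isCompact_Icc
    |>.mono_set Ioc_subset_Icc_self) hφ measurableSet_Ioc hgφ

lemma integral_Ioc_zero_one_rpow {r : ℝ} (hr : -1 < r) :
    ∫ t in Ioc (0 : ℝ) 1, t ^ r = (r + 1)⁻¹ := by
  rw [← intervalIntegral.integral_of_le zero_le_one, integral_rpow (Or.inl hr), one_rpow,
    zero_rpow (by linarith), sub_zero, one_div]

section CubeSublevel

variable {ι : Type*} [Fintype ι]

def cubeSublevel (m : ι → ℝ) (δ : ℝ) : Set (ι → ℝ) :=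
  {x | (∀ i, x i ∈ Ioo (0 : ℝ) 1) ∧ ∏ i, x i ^ m i < δ}

lemma measurable_prod_rpow (m : ι → ℝ) : Measurable fun x : ι → ℝ => ∏ i, x i ^ m i :=
  Finset.measurable_prod _ fun i _ => (measurable_pi_apply i).pow_const (m i)

lemma volume_ne_top_of_forall_mem_Ioo {s : Set (ι → ℝ)} (hs : ∀ x ∈ s, ∀ i, x i ∈ Ioo (0 : ℝ) 1) :
    volume s ≠ ⊤ :=
  ((measure_mono fun x hx => mem_univ_pi.2 (hs x hx)).trans_lt
    (by simp [volume_pi_pi] : volume (univ.pi fun _ : ι => Ioo (0 : ℝ) 1) < ⊤)).ne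

lemma volume_cubeSublevel_ne_top (m : ι → ℝ) (δ : ℝ) : volume (cubeSublevel m δ) ≠ ⊤ :=
  volume_ne_top_of_forall_mem_Ioo fun _ hx => hx.1

lemma prod_mul_measureReal_cubeSublevel_le (m : ι → ℝ) {d : ι → ℝ} (hd0 : ∀ i, 0 < d i)
    (hd1 : ∀ i, d i ≤ 1) (δ : ℝ) :
    (∏ i, d i) * volume.real (cubeSublevel m (δ / ∏ i, d i ^ m i)) ≤
      volume.real (cubeSublevel m δ) := by
  classical
  set L := Matrix.toLin' (Matrix.diagonal d)
  have hL : ∀ x i, L x i = d i * x i := fun x i => by simp [L, Matrix.mulVec_diagonal]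
  have hdet : LinearMap.det L = ∏ i, d i := by
    rw [LinearMap.det_toLin', Matrix.det_diagonal]
  have hprod_pos : 0 < ∏ i, d i ^ m i := Finset.prod_pos fun i _ => rpow_pos_of_pos (hd0 i) _
  have himage : L '' cubeSublevel m (δ / ∏ i, d i ^ m i) ⊆ cubeSublevel m δ := by
    rintro _ ⟨x, ⟨hx01, hxδ⟩, rfl⟩
    refine ⟨fun i => ?_, ?_⟩
    · rw [hL]
      exact ⟨mul_pos (hd0 i) (hx01 i).1,
        (mul_le_of_le_one_left (hx01 i).1.le (hd1 i)).trans_lt (hx01 i).2⟩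
    · have hmul : ∏ i, L x i ^ m i = (∏ i, d i ^ m i) * ∏ i, x i ^ m i := by
        simp_rw [hL, ← Finset.prod_mul_distrib]
        exact Finset.prod_congr rfl fun i _ => mul_rpow (hd0 i).le (hx01 i).1.le
      rwa [hmul, ← lt_div_iff₀' hprod_pos]
  have hvol := measure_mono (μ := volume) himage
  rw [Measure.addHaar_image_linearMap, hdet,
    abs_of_pos (Finset.prod_pos fun i _ => hd0 i)] at hvol
  calc (∏ i, d i) * volume.real (cubeSublevel m (δ / ∏ i, d i ^ m i))
      = (ENNReal.ofReal (∏ i, d i) * volume (cubeSublevel m (δ / ∏ i, d i ^ m i))).toReal := by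
        rw [ENNReal.toReal_mul, ENNReal.toReal_ofReal (Finset.prod_nonneg fun i _ => (hd0 i).le),
          measureReal_def]
    _ ≤ volume.real (cubeSublevel m δ) := ENNReal.toReal_mono (volume_cubeSublevel_ne_top m δ) hvol

lemma measureReal_cubeSublevel_div_le (m : ι → ℝ) {i₀ : ι} {M : ℝ} (hi₀ : m i₀ = M) (hM : 0 < M)
    (δ : ℝ) {t : ℝ} (ht : t ∈ Ioc 0 1) :
    volume.real (cubeSublevel m (δ / t)) ≤ t ^ (-M⁻¹) * volume.real (cubeSublevel m δ) := by
  classical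
  set c := t ^ M⁻¹
  have hc0 : 0 < c := rpow_pos_of_pos ht.1 _
  set d := Function.update (fun _ => (1 : ℝ)) i₀ c
  have hd_ne : ∀ i ≠ i₀, d i = 1 := fun i hi => Function.update_of_ne hi _ _
  have hd0 : ∀ i, 0 < d i := fun i => by
    rcases eq_or_ne i i₀ with rfl | hi
    · simpa [d] using hc0
    · simp [hd_ne i hi]
  have hd1 : ∀ i, d i ≤ 1 := fun i => by
    rcases eq_or_ne i i₀ with rfl | hi
    · simpa [d] using rpow_le_one ht.1.le ht.2 (inv_nonneg.2 hM.le)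
    · simp [hd_ne i hi]
  have hprod : ∏ i, d i = c := by
    rw [Finset.prod_eq_single i₀ (fun i _ hi => hd_ne i hi) (by simp)]
    simp [d]
  have hprod_rpow : ∏ i, d i ^ m i = t := by
    rw [Finset.prod_eq_single i₀ (fun i _ hi => by simp [hd_ne i hi]) (by simp)]
    simp [d, c, hi₀, rpow_inv_rpow ht.1.le hM.ne']
  have hscale := prod_mul_measureReal_cubeSublevel_le m hd0 hd1 δ
  rw [hprod, hprod_rpow] at hscale
  rw [rpow_neg ht.1.le]
  exact (le_inv_mul_iff₀ hc0).2 hscale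

end CubeSublevel

theorem stmt3_general {n : ℕ} (m : Fin n → ℝ)
    (M : ℝ) (hM : IsGreatest (Set.range m) M) (hM1 : 1 < M) :
    ∃ C' : ℝ, 0 < C' ∧ ∀ δ : ℝ, 0 < δ → δ < 1 →
      (∫ x in {x : Fin n → ℝ | (∀ i, x i ∈ Set.Ioo (0:ℝ) 1) ∧
          δ / ∏ i, x i ^ m i < 1}, δ / ∏ i, x i ^ m i) ≤
        C' * (volume {x : Fin n → ℝ | (∀ i, x i ∈ Set.Ioo (0:ℝ) 1) ∧
          ∏ i, x i ^ m i < δ}).toReal := by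
  obtain ⟨⟨i₀, hi₀⟩, -⟩ := hM
  have hM0 : 0 < M := by linarith
  have hr : -1 < -M⁻¹ := neg_lt_neg (inv_lt_one_of_one_lt₀ hM1)
  refine ⟨(-M⁻¹ + 1)⁻¹, inv_pos.2 (by linarith), fun δ hδ0 _ => ?_⟩
  set g : (Fin n → ℝ) → ℝ := fun x => δ / ∏ i, x i ^ m i
  have hg : Measurable g := measurable_const.div (measurable_prod_rpow m)
  set E := {x : Fin n → ℝ | (∀ i, x i ∈ Ioo (0:ℝ) 1) ∧ g x < 1}
  have hE : MeasurableSet E := by measurability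
  have : IsFiniteMeasure (volume.restrict E) :=
    isFiniteMeasure_restrict.2 (volume_ne_top_of_forall_mem_Ioo fun _ hx => hx.1)
  have hprod_pos : ∀ x ∈ E, 0 < ∏ i, x i ^ m i :=
    fun x hx => Finset.prod_pos fun i _ => rpow_pos_of_pos (hx.1 i).1 _
  have hsuper : ∀ t ∈ Ioc (0 : ℝ) 1, {x | t < g x} ∩ E ⊆ cubeSublevel m (δ / t) :=
    fun t ht x ⟨hxt, hxE⟩ => ⟨hxE.1, (lt_div_iff₀' ht.1).2 ((lt_div_iff₀ (hprod_pos x hxE)).1 hxt)⟩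
  calc ∫ x in E, g x
      ≤ ∫ t in Ioc 0 1, t ^ (-M⁻¹) * volume.real (cubeSublevel m δ) := by
        refine integral_le_setIntegral_Ioc_of_measureReal_lt_le hg.aestronglyMeasurable
          (ae_restrict_of_forall_mem hE fun x hx => div_nonneg hδ0.le (hprod_pos x hx).le)
          (ae_restrict_of_forall_mem hE fun x hx => hx.2.le) ?_ fun t ht => ?_
        · exact (intervalIntegral.intervalIntegrable_rpow' hr).1.mul_const _
        · rw [measureReal_restrict_apply (measurableSet_lt measurable_const hg)]
          exact (measureReal_mono (hsuper t ht) (volume_cubeSublevel_ne_top m _)).trans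
            (measureReal_cubeSublevel_div_le m hi₀ hM0 δ ht)
    _ = (-M⁻¹ + 1)⁻¹ * volume.real (cubeSublevel m δ) := by
        rw [integral_mul_const, integral_Ioc_zero_one_rpow hr]

/-- Lemma 3.1(d): when `M = max m i > 1`, the integral of `δ / x^m` over the region of the
unit cube where `δ / x^m < 1` is dominated by the measure of the sublevel set `{x^m < δ}`. -/
theorem stmt3 {n : ℕ} (m : Fin n → ℝ) (hm : ∀ i, 0 ≤ m i)
    (M : ℝ) (hM : IsGreatest (Set.range m) M) (hM1 : 1 < M) :
    ∃ C' : ℝ, 0 < C' ∧ ∀ δ : ℝ, 0 < δ → δ < 1 →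
      (∫ x in {x : Fin n → ℝ | (∀ i, x i ∈ Set.Ioo (0:ℝ) 1) ∧
          δ / ∏ i, x i ^ m i < 1}, δ / ∏ i, x i ^ m i) ≤
        C' * (volume {x : Fin n → ℝ | (∀ i, x i ∈ Set.Ioo (0:ℝ) 1) ∧
          ∏ i, x i ^ m i < δ}).toReal :=
  stmt3_general m M hM hM1
end

section
/- Suppose $a^1, \dots, a^n \in \mathbb{R}^n$ are linearly independent vectors such that the positive orthant satisfies $\{x \in \mathbb{R}^n : x_m \ge 0 \text{ for all } m\} \subset \bigcap_{l=1}^n \{x : a^l \cdot x \ge 0\}$. For each $l$, let $b_l$ be a vector spanning the line $\bigcap_{l' \ne l} \{x : a^{l'} \cdot x = 0\}$, normalized so that $a^l \cdot b_l > 0$. If ${\bf e}_m = \sum_{l=1}^n d_{lm} b_l$ denotes the expansion of the $m$-th standard basis vector in the basis $\{b_l\}$, then every coefficient $d_{lm}$ is nonnegative. -/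
open Set

/-- Lemma 2.3: if the cone cut out by the half-spaces `a^l · x ≥ 0` contains the positive
orthant and `b_l` are the edge directions (normalized so `a^l · b_l > 0`), then the
coefficients of the standard basis vectors in the basis `{b_l}` are all nonnegative. -/
theorem stmt5 {n : ℕ} (a b : Fin n → Fin n → ℝ) (d : Fin n → Fin n → ℝ)
    (ha : LinearIndependent ℝ a)
    (horthant : {x : Fin n → ℝ | ∀ m, 0 ≤ x m} ⊆ ⋂ l, {x : Fin n → ℝ | 0 ≤ ∑ j, a l j * x j})
    (hb_ne : ∀ l, b l ≠ 0)
    (hb_line : ∀ l l', l' ≠ l → ∑ j, a l' j * b l j = 0)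
    (hb_pos : ∀ l, 0 < ∑ j, a l j * b l j)
    (hd : ∀ m : Fin n, (Pi.single m (1:ℝ)) = ∑ l, d l m • b l) :
    ∀ l m, 0 ≤ d l m := by
  intro l m
  set e : Fin n → ℝ := Pi.single m (1:ℝ) with he
  have hmem : e ∈ {x : Fin n → ℝ | ∀ k, 0 ≤ x k} := by
    intro k
    rcases eq_or_ne k m with h | h <;> simp [he, Pi.single_apply, h]
  have h1 : 0 ≤ ∑ j, a l j * e j := by
    have := Set.mem_iInter.mp (horthant hmem) l
    simpa using this
  have h2 : ∑ j, a l j * e j = d l m * ∑ j, a l j * b l j := by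
    rw [he, hd m]
    simp only [Finset.sum_apply, Pi.smul_apply, smul_eq_mul, Finset.mul_sum]
    rw [Finset.sum_comm]
    rw [Finset.sum_eq_single l]
    · exact Finset.sum_congr rfl fun j _ => by ring
    · intro l' _ hl'
      have := hb_line l' l hl'.symm
      calc ∑ j, a l j * (d l' m * b l' j) = d l' m * ∑ j, a l j * b l' j := by
            rw [Finset.mul_sum]; exact Finset.sum_congr rfl fun j _ => by ring
        _ = 0 := by rw [this, mul_zero]
    · simp
  rw [h2] at h1
  exact nonneg_of_mul_nonneg_left h1 (hb_pos l)
end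

section
/- Let $h(x) = (x^{b_1}, \dots, x^{b_n})$ be a monomial map on the positive orthant with $B = (b_{ij})$ invertible and the Jacobian determinant of $h$ constant. For $\alpha \in \mathbb{R}^n$, let $\tilde\alpha$ be the exponent vector such that $x^\alpha = z^{\tilde\alpha}$ under the substitution $z = h(x)$, i.e., $\tilde\alpha = (B^T)^{-1}\alpha$. Then for each $i$, the $i$-th component $\tilde\alpha_i$ equals the common value $t$ such that $(t, t, \dots, t)$ lies in the affine hyperplane $\beta_i + \alpha$, where $\beta_i$ is the hyperplane through the origin spanned by $\{b_j : j \ne i\}$. -/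
open Set

/-! If the columns of `B` sum to one, then `∑ⱼ b_j = 𝟙`, so for `α = ∑ⱼ α̃_j b_j` the vector
`α̃_i 𝟙 - α = ∑ⱼ (α̃_i - α̃_j) b_j` has no `b_i`-component. -/

theorem smul_sum_sub_sum_smul_mem_span_ne {ι R M : Type*} [Fintype ι] [CommRing R]
    [AddCommGroup M] [Module R M] (b : ι → M) (w : ι → R) (i : ι) :
    w i • ∑ j, b j - ∑ j, w j • b j ∈ Submodule.span R {v : M | ∃ j, j ≠ i ∧ v = b j} := by
  have hsplit : w i • ∑ j, b j - ∑ j, w j • b j = ∑ j, (w i - w j) • b j := by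
    simp only [Finset.smul_sum, sub_smul, Finset.sum_sub_distrib]
  rw [hsplit]
  refine Submodule.sum_mem _ fun j _ => ?_
  obtain rfl | hj := eq_or_ne j i
  · simp
  · exact Submodule.smul_mem _ _ (Submodule.subset_span ⟨j, hj, rfl⟩)

/-- Lemma 2.5: under a constant-Jacobian monomial change of variables `z = h(x)` with exponent
matrix `B` (rows `b_i`), the `i`-th component of the transformed exponent
`α̃ = (Bᵀ)⁻¹ α` of a monomial `x^α` is the value `t` such that the diagonal point `(t,…,t)`
lies in the affine hyperplane `α + span{b_j : j ≠ i}`. -/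
theorem stmt8 {n : ℕ} (B : Matrix (Fin n) (Fin n) ℝ) (hdet : B.det ≠ 0)
    (hsum : ∀ j, ∑ i, B i j = 1) (α : Fin n → ℝ) :
    ∀ i : Fin n,
      ((fun _ => (B.transpose)⁻¹.mulVec α i) - α : Fin n → ℝ) ∈
        Submodule.span ℝ {v : Fin n → ℝ | ∃ j, j ≠ i ∧ v = B j} := by
  intro i
  set w := (B.transpose)⁻¹.mulVec α
  have hunit : IsUnit B.transpose.det := by simpa using hdet.isUnit
  have hα : ∑ j, w j • B j = α := by
    rw [← Matrix.vecMul_eq_sum, ← Matrix.mulVec_transpose, Matrix.mulVec_mulVec,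
      Matrix.mul_nonsing_inv _ hunit, Matrix.one_mulVec]
  have hones : ∑ j, B j = fun _ => 1 := funext fun k => (Finset.sum_apply k _ _).trans (hsum k)
  have hmem := smul_sum_sub_sum_smul_mem_span_ne B w i
  rw [hα, hones] at hmem
  convert hmem using 2
  ext
  simp
end

section
/- Let $S(x,y)$ be a real-analytic function near the origin in $\mathbb{R}^2$ with $S(0) = 0$, Newton polygon $N(S)$ and Newton distance $d$. If $F$ is a compact 1-dimensional edge of $N(S)$ lying entirely on or below the diagonal line $y = x$ (i.e., not intersecting the diagonal in its interior), then the polynomial $S_F(x,y) = \sum_{\alpha \in F} s_\alpha x^{\alpha_1} y^{\alpha_2}$ has no zero in $(\mathbb{R}\setminus\{0\})^2$ of order greater than $d$. -/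
/-!
The edge `F` lies on a supporting line `a₁ x + a₂ y = c` of the Newton polygon `N`. Since `N` is
upward closed, `a₁, a₂ ≥ 0`, and `a₁ > 0` because `F` is bounded; hence distinct lattice points
of `F` have distinct `y`-exponents. If `(α₁, b)` is the one with the largest, then
`∂_y^b S_F = s_α b! x^α₁`, which does not vanish off the axes. Finally `b ≤ d`: for `(t, t) ∈ N`,
`(a₁ + a₂) t ≥ c = a₁ α₁ + a₂ b ≥ (a₁ + a₂) b` because `b ≤ α₁`.
-/

open Set

theorem IsUpperSet.convexHull {𝕜 E : Type*} [Semiring 𝕜] [PartialOrder 𝕜] [IsOrderedRing 𝕜]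
    [AddCommGroup E] [PartialOrder E] [IsOrderedAddMonoid E] [Module 𝕜 E] {s : Set E}
    (hs : IsUpperSet s) : IsUpperSet (convexHull 𝕜 s) := by
  intro x y hxy hx
  have hsub : _root_.convexHull 𝕜 s ⊆ (· + (y - x)) ⁻¹' _root_.convexHull 𝕜 s :=
    convexHull_min
      (fun z hz ↦ subset_convexHull 𝕜 s <| hs (le_add_of_nonneg_right <| sub_nonneg.2 hxy) hz)
      ((convex_convexHull 𝕜 s).translate_preimage_left _)
  simpa using hsub hx

def newtonPolygon (A : Set (ℕ × ℕ)) : Set (ℝ × ℝ) :=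
  convexHull ℝ {x | ∃ α ∈ A, ((α.1 : ℝ), (α.2 : ℝ)) ≤ x}

theorem isUpperSet_newtonPolygon (A : Set (ℕ × ℕ)) : IsUpperSet (newtonPolygon A) :=
  IsUpperSet.convexHull fun _ _ hxy ⟨α, hα, hαx⟩ ↦ ⟨α, hα, hαx.trans hxy⟩

theorem natCast_mem_newtonPolygon {A : Set (ℕ × ℕ)} {α : ℕ × ℕ} (hα : α ∈ A) :
    ((α.1 : ℝ), (α.2 : ℝ)) ∈ newtonPolygon A :=
  subset_convexHull ℝ _ ⟨α, hα, le_rfl⟩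

theorem nonneg_of_forall_le_add_mul {K : Type*} [Field K] [LinearOrder K] [IsStrictOrderedRing K]
    {a k c : K} (h : ∀ t : K, 0 ≤ t → c ≤ k + a * t) : 0 ≤ a := by
  by_contra! ha
  have hk : c ≤ k := by simpa using h 0 le_rfl
  have ht := h ((k - c + 1) / -a) (div_nonneg (by linarith) (by linarith))
  have hat : a * ((k - c + 1) / -a) = -(k - c + 1) := by field_simp [ha.ne]
  linarith

section SupportingLine

variable {N : Set (ℝ × ℝ)} {a : ℝ × ℝ} {c : ℝ}

theorem IsUpperSet.nonneg_of_supporting (hN : IsUpperSet N) {x : ℝ × ℝ} (hx : x ∈ N)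
    (hc : ∀ y ∈ N, c ≤ a.1 * y.1 + a.2 * y.2) : 0 ≤ a.1 ∧ 0 ≤ a.2 := by
  constructor
  · refine nonneg_of_forall_le_add_mul (c := c) (k := a.1 * x.1 + a.2 * x.2) fun t ht ↦ ?_
    have := hc (x.1 + t, x.2) (hN (by simpa [Prod.le_def]) hx)
    linear_combination this
  · refine nonneg_of_forall_le_add_mul (c := c) (k := a.1 * x.1 + a.2 * x.2) fun t ht ↦ ?_
    have := hc (x.1, x.2 + t) (hN (by simpa [Prod.le_def]) hx)
    linear_combination this

theorem IsUpperSet.fst_pos_of_supporting (hN : IsUpperSet N) {x : ℝ × ℝ} (hx : x ∈ N)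
    (hxc : a.1 * x.1 + a.2 * x.2 = c) (hc : ∀ y ∈ N, c ≤ a.1 * y.1 + a.2 * y.2)
    (hbdd : BddAbove {y ∈ N | a.1 * y.1 + a.2 * y.2 = c}) : 0 < a.1 := by
  refine (hN.nonneg_of_supporting hx hc).1.lt_of_ne fun ha ↦ ?_
  obtain ⟨M, hM⟩ := hbdd
  have hy : (max M.1 x.1 + 1, x.2) ∈ N :=
    hN (show x ≤ _ from ⟨by dsimp only; linarith [le_max_right M.1 x.1], le_rfl⟩) hx
  have := (hM ⟨hy, by rw [← hxc, ← ha]; ring⟩).1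
  linarith [le_max_left M.1 x.1]

theorem IsUpperSet.snd_le_sInf_diag (hN : IsUpperSet N) (hc : ∀ y ∈ N, c ≤ a.1 * y.1 + a.2 * y.2)
    (ha : 0 < a.1) {β : ℝ × ℝ} (hβN : β ∈ N) (hβc : a.1 * β.1 + a.2 * β.2 = c)
    (hβ : β.2 ≤ β.1) : β.2 ≤ sInf {t : ℝ | (t, t) ∈ N} := by
  have ha2 := (hN.nonneg_of_supporting hβN hc).2
  refine le_csInf ⟨max β.1 β.2, hN ⟨le_max_left _ _, le_max_right _ _⟩ hβN⟩ fun t ht ↦ ?_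
  have := hc _ ht
  nlinarith

end SupportingLine

theorem exists_mem_newtonPolygon_face {A : Set (ℕ × ℕ)} {a : ℝ × ℝ} {c : ℝ}
    (hc : ∀ y ∈ newtonPolygon A, c ≤ a.1 * y.1 + a.2 * y.2) {x : ℝ × ℝ}
    (hx : x ∈ newtonPolygon A) (hxc : a.1 * x.1 + a.2 * x.2 = c) :
    ∃ α ∈ A, a.1 * α.1 + a.2 * α.2 = c := by
  have ha := (isUpperSet_newtonPolygon A).nonneg_of_supporting hx hc
  let ℓ : ℝ × ℝ →ₗ[ℝ] ℝ := a.1 • LinearMap.fst ℝ ℝ ℝ + a.2 • LinearMap.snd ℝ ℝ ℝ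
  obtain ⟨y, ⟨α, hα, hαy⟩, hyx⟩ :=
    (ℓ.concaveOn convex_univ).exists_le_of_mem_convexHull (subset_univ _) hx
  refine ⟨α, hα, le_antisymm ?_ (hc _ (natCast_mem_newtonPolygon hα))⟩
  obtain ⟨ha1, ha2⟩ := ha
  obtain ⟨hαy1, hαy2⟩ := hαy
  simp only [ℓ, LinearMap.add_apply, LinearMap.smul_apply, LinearMap.fst_apply, LinearMap.snd_apply,
    smul_eq_mul, hxc] at hyx
  calc a.1 * α.1 + a.2 * α.2 ≤ a.1 * y.1 + a.2 * y.2 := by gcongr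
    _ ≤ c := hyx

theorem finite_setOf_natCast_mem {K : Set (ℝ × ℝ)} (hK : BddAbove K) :
    {α : ℕ × ℕ | ((α.1 : ℝ), (α.2 : ℝ)) ∈ K}.Finite := by
  obtain ⟨M, hM⟩ := hK
  refine (Set.finite_Iic (⌈M.1⌉₊, ⌈M.2⌉₊)).subset fun α hα ↦ ?_
  have hαM := hM hα
  exact ⟨Nat.cast_le.1 (hαM.1.trans (Nat.le_ceil _)), Nat.cast_le.1 (hαM.2.trans (Nat.le_ceil _))⟩

theorem bddAbove_segment {𝕜 E : Type*} [Semiring 𝕜] [PartialOrder 𝕜] [AddCommMonoid E] [Lattice E]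
    [IsOrderedAddMonoid E] [Module 𝕜 E] [PosSMulMono 𝕜 E] (p q : E) : BddAbove (segment 𝕜 p q) :=
  bddAbove_Icc.mono <| (convex_Icc (p ⊓ q) (p ⊔ q)).segment_subset
    ⟨inf_le_left, le_sup_left⟩ ⟨inf_le_right, le_sup_right⟩

theorem Set.Finite.exists_forall_lt_of_injOn {ι : Type*} {T : Set ι} (hT : T.Finite)
    (hne : T.Nonempty) {e : ι → ℕ} (he : InjOn e T) : ∃ m ∈ T, ∀ i ∈ T, i ≠ m → e i < e m := by
  obtain ⟨m, hm, hmax⟩ := T.exists_max_image e hT hne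
  exact ⟨m, hm, fun i hi hne ↦ (hmax i hi).lt_of_ne fun h ↦ hne (he hi hm h)⟩

section Derivatives

variable {𝕜 : Type*} [NontriviallyNormedField 𝕜] {ι : Type*}

theorem iteratedDeriv_sum_mul_pow (t : Finset ι) (c : ι → 𝕜) (e : ι → ℕ) (k : ℕ) (y : 𝕜) :
    iteratedDeriv k (fun y ↦ ∑ i ∈ t, c i * y ^ e i) y
      = ∑ i ∈ t, c i * ((e i).descFactorial k * y ^ (e i - k)) := by
  rw [iteratedDeriv_fun_sum fun i _ ↦ by fun_prop]
  simp

theorem iteratedDeriv_finsum_mul_pow_of_lt {T : Set ι} (hT : T.Finite) (c : ι → 𝕜) (e : ι → ℕ)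
    {m : ι} (hm : m ∈ T) (hlt : ∀ i ∈ T, i ≠ m → e i < e m) (y : 𝕜) :
    iteratedDeriv (e m) (fun y ↦ ∑ᶠ i ∈ T, c i * y ^ e i) y = c m * (e m).factorial := by
  simp_rw [finsum_mem_eq_finite_toFinset_sum _ hT]
  rw [iteratedDeriv_sum_mul_pow, Finset.sum_eq_single m]
  · simp [Nat.descFactorial_self]
  · intro i hi him
    simp [Nat.descFactorial_eq_zero_iff_lt.2 (hlt i (hT.mem_toFinset.1 hi) him)]
  · exact fun h ↦ (h (hT.mem_toFinset.2 hm)).elim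

end Derivatives

theorem stmt11_general (s : ℕ × ℕ → ℝ)
    (N : Set (ℝ × ℝ))
    (hN : N = convexHull ℝ
      {x : ℝ × ℝ | ∃ α : ℕ × ℕ, s α ≠ 0 ∧ (α.1 : ℝ) ≤ x.1 ∧ (α.2 : ℝ) ≤ x.2})
    (d : ℝ) (hd : d = sInf {t : ℝ | (t, t) ∈ N})
    (F : Set (ℝ × ℝ)) (p q : ℝ × ℝ) (hF : F = segment ℝ p q)
    (hface : ∃ (a : ℝ × ℝ) (c : ℝ), a ≠ 0 ∧ (∀ x ∈ N, c ≤ a.1 * x.1 + a.2 * x.2) ∧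
      F = {x ∈ N | a.1 * x.1 + a.2 * x.2 = c})
    (hbelow : ∀ x ∈ F, x.2 ≤ x.1) :
    ∀ z : ℝ × ℝ, z.1 ≠ 0 → z.2 ≠ 0 →
      ∃ a b : ℕ, (a + b : ℝ) ≤ d ∧
        iteratedDeriv a (fun x : ℝ =>
          iteratedDeriv b (fun y : ℝ =>
            ∑ᶠ α ∈ {α : ℕ × ℕ | s α ≠ 0 ∧ ((α.1 : ℝ), (α.2 : ℝ)) ∈ F},
              s α * x ^ α.1 * y ^ α.2) z.2) z.1 ≠ 0 := by
  intro z hz1 _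
  replace hN : N = newtonPolygon {α | s α ≠ 0} := hN
  have hNup : IsUpperSet N := hN ▸ isUpperSet_newtonPolygon _
  obtain ⟨a, c, -, hc, rfl⟩ := hface
  have hbdd : BddAbove {x ∈ N | a.1 * x.1 + a.2 * x.2 = c} := hF ▸ bddAbove_segment p q
  obtain ⟨hpN, hpc⟩ : p ∈ {x ∈ N | a.1 * x.1 + a.2 * x.2 = c} := hF ▸ left_mem_segment ℝ p q
  have ha : 0 < a.1 := hNup.fst_pos_of_supporting hpN hpc hc hbdd
  set T := {α : ℕ × ℕ | s α ≠ 0 ∧ ((α.1 : ℝ), (α.2 : ℝ)) ∈ {x ∈ N | a.1 * x.1 + a.2 * x.2 = c}}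
  have hT : T.Finite := (finite_setOf_natCast_mem hbdd).subset fun α hα ↦ hα.2
  have hTne : T.Nonempty := by
    subst hN
    obtain ⟨α, hα, hαc⟩ := exists_mem_newtonPolygon_face hc hpN hpc
    exact ⟨α, hα, natCast_mem_newtonPolygon hα, hαc⟩
  have hsnd : InjOn Prod.snd T := fun α hα β hβ h ↦ by
    have : (α.1 : ℝ) = β.1 := by
      have hline := hα.2.2.trans hβ.2.2.symm
      simp only [h] at hline
      exact mul_left_cancel₀ ha.ne' (by linarith)
    exact Prod.ext (by exact_mod_cast this) h
  obtain ⟨m, hmT, hmax⟩ := hT.exists_forall_lt_of_injOn hTne hsnd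
  refine ⟨0, m.2, ?_, ?_⟩
  · rw [hd, Nat.cast_zero, zero_add]
    exact hNup.snd_le_sInf_diag hc ha hmT.2.1 hmT.2.2 (hbelow _ hmT.2)
  · rw [iteratedDeriv_zero,
      iteratedDeriv_finsum_mul_pow_of_lt hT (fun α ↦ s α * z.1 ^ α.1) Prod.snd hmT hmax]
    exact mul_ne_zero (mul_ne_zero hmT.1 (pow_ne_zero _ hz1)) (by positivity)

/-- Lemma 5.1: if `F` is a compact 1-dimensional edge of the Newton polygon of a
real-analytic `S(x,y)` with `S(0)=0` lying entirely on or below the diagonal `y = x`,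
then `S_F` has no zero on `(ℝ∖{0})²` of order greater than the Newton distance `d`:
at every such point some partial derivative of order at most `d` is nonzero. -/
theorem stmt11 (s : ℕ × ℕ → ℝ) (hs0 : s (0, 0) = 0)
    (hanalytic : ∃ C R : ℝ, 0 < C ∧ 0 < R ∧ ∀ α : ℕ × ℕ, |s α| ≤ C * R ^ (α.1 + α.2))
    (hsupp : ∃ α, s α ≠ 0)
    (N : Set (ℝ × ℝ))
    (hN : N = convexHull ℝ
      {x : ℝ × ℝ | ∃ α : ℕ × ℕ, s α ≠ 0 ∧ (α.1 : ℝ) ≤ x.1 ∧ (α.2 : ℝ) ≤ x.2})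
    (d : ℝ) (hd : d = sInf {t : ℝ | (t, t) ∈ N})
    (F : Set (ℝ × ℝ)) (p q : ℝ × ℝ) (hpq : p ≠ q) (hF : F = segment ℝ p q)
    (hFN : F ⊆ N)
    (hface : ∃ (a : ℝ × ℝ) (c : ℝ), a ≠ 0 ∧ (∀ x ∈ N, c ≤ a.1 * x.1 + a.2 * x.2) ∧
      F = {x ∈ N | a.1 * x.1 + a.2 * x.2 = c})
    (hbelow : ∀ x ∈ F, x.2 ≤ x.1) :
    ∀ z : ℝ × ℝ, z.1 ≠ 0 → z.2 ≠ 0 →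
      ∃ a b : ℕ, (a + b : ℝ) ≤ d ∧
        iteratedDeriv a (fun x : ℝ =>
          iteratedDeriv b (fun y : ℝ =>
            ∑ᶠ α ∈ {α : ℕ × ℕ | s α ≠ 0 ∧ ((α.1 : ℝ), (α.2 : ℝ)) ∈ F},
              s α * x ^ α.1 * y ^ α.2) z.2) z.1 ≠ 0 :=
  stmt11_general s N hN d hd F p q hF hface hbelow
end

section
/- For $t < 0$, let $U_t(x,y,z) = x^4 + t x^2 + y^2 + z^2$. Then for every neighborhood $V$ of the origin in $\mathbb{R}^3$ there exists $C > 0$ such that for all small $\epsilon > 0$, $|\{(x,y,z) \in V : |U_t(x,y,z)| < \epsilon\}| \ge C\epsilon$; i.e., the growth index of $U_t$ at the origin is at most $1$. -/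
open MeasureTheory Set

/-!
Write `s = -(x⁴ + t x² + y²)`, so that `U_t = z² - s`. For `x ∈ [δ, 2δ]` and
`0 ≤ y ≤ δ√(-t)/2` the number `s` is positive and at most `4δ²(-t)`, so on the shell
`√s ≤ z ≤ √s + r` one has `|U_t| ≤ r (2√s + r) < 6δ√(-t) r`. Taking `r = ε / (6δ√(-t))`,
Fubini bounds the measure of this shell below by `δ ε / 12`, and for small `δ` the shell lies
in the given neighbourhood of the origin.
-/

theorem MeasureTheory.Measure.mul_le_prod_apply_of_le_measure_preimage_prodMk
    {α β : Type*} [MeasurableSpace α] [MeasurableSpace β] {μ : Measure α} {ν : Measure β}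
    [SFinite ν] {s : Set (α × β)} {A : Set α} {c : ENNReal}
    (h : ∀ x ∈ A, c ≤ ν (Prod.mk x ⁻¹' s)) : μ A * c ≤ μ.prod ν s := by
  set T := toMeasurable (μ.prod ν) s
  have hT : MeasurableSet T := measurableSet_toMeasurable _ _
  calc μ A * c = ∫⁻ _ in A, c ∂μ := by rw [setLIntegral_const, mul_comm]
    _ ≤ ∫⁻ x in A, ν (Prod.mk x ⁻¹' T) ∂μ :=
      setLIntegral_mono (measurable_measure_prodMk_left hT) fun x hx =>
        (h x hx).trans (measure_mono (preimage_mono (subset_toMeasurable _ _)))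
    _ ≤ ∫⁻ x, ν (Prod.mk x ⁻¹' T) ∂μ := setLIntegral_le_lintegral _ _
    _ = μ.prod ν s := by rw [← Measure.prod_apply hT, measure_toMeasurable]

theorem MeasureTheory.Measure.mul_mul_le_prod_prod_apply
    {α β γ : Type*} [MeasurableSpace α] [MeasurableSpace β] [MeasurableSpace γ]
    {μ : Measure α} {ν : Measure β} {κ : Measure γ} [SFinite ν] [SFinite κ]
    {s : Set (α × β × γ)} {A : Set α} {B : Set β} {c : ENNReal}
    (h : ∀ x ∈ A, ∀ y ∈ B, c ≤ κ {z | (x, y, z) ∈ s}) :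
    μ A * ν B * c ≤ μ.prod (ν.prod κ) s := by
  rw [mul_assoc]
  exact mul_le_prod_apply_of_le_measure_preimage_prodMk fun x hx =>
    mul_le_prod_apply_of_le_measure_preimage_prodMk (h x hx)

theorem abs_sq_sub_le_of_mem_Icc_sqrt {s r z : ℝ} (hs : 0 ≤ s) (hr : 0 ≤ r)
    (hz : z ∈ Icc (√s) (√s + r)) : |z ^ 2 - s| ≤ r * (2 * √s + r) := by
  have hsq := Real.sq_sqrt hs
  have hroot := Real.sqrt_nonneg s
  rw [abs_of_nonneg (by nlinarith [hz.1])]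
  nlinarith [hz.1, hz.2]

theorem mem_ball_and_abs_lt_of_mem_shell {t a δ r x y z : ℝ} (hat : a ^ 2 = -t) (ha : 0 < a) (hδ : 0 < δ)
    (hδa : δ ≤ a / 4) (hr : 0 < r) (hra : r < δ * a)
    (hx : x ∈ Icc δ (2 * δ)) (hy : y ∈ Icc 0 (δ * a / 2))
    (hz : z ∈ Icc (√(-(x ^ 4 + t * x ^ 2 + y ^ 2))) (√(-(x ^ 4 + t * x ^ 2 + y ^ 2)) + r)) :
    (x, y, z) ∈ Metric.ball 0 (4 * δ * (1 + a)) ∧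
      |x ^ 4 + t * x ^ 2 + y ^ 2 + z ^ 2| < 6 * δ * a * r := by
  set s := -(x ^ 4 + t * x ^ 2 + y ^ 2)
  obtain ⟨hx₁, hx₂⟩ := hx
  obtain ⟨hy₁, hy₂⟩ := hy
  have hs : s = x ^ 2 * (a ^ 2 - x ^ 2) - y ^ 2 := by simp only [s, hat]; ring
  have hx_sq : x ^ 2 ≤ 4 * δ ^ 2 := by nlinarith
  have hy_sq : y ^ 2 ≤ δ ^ 2 * a ^ 2 / 4 := by nlinarith
  have hs_nonneg : 0 ≤ s := by
    have : δ ^ 2 * (3 * a ^ 2 / 4) ≤ x ^ 2 * (a ^ 2 - x ^ 2) :=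
      mul_le_mul (by nlinarith) (by nlinarith) (by nlinarith) (sq_nonneg x)
    nlinarith
  have hsqrt_le : √s ≤ 2 * δ * a :=
    Real.sqrt_le_iff.mpr ⟨by positivity, by nlinarith [sq_nonneg x, sq_nonneg y]⟩
  have hz₀ : 0 ≤ z := (Real.sqrt_nonneg s).trans hz.1
  have hU : x ^ 4 + t * x ^ 2 + y ^ 2 + z ^ 2 = z ^ 2 - s := by ring
  refine ⟨?_, ?_⟩
  · simp only [Metric.mem_ball, Prod.dist_eq, Prod.fst_zero, Prod.snd_zero, Real.dist_eq,
      sub_zero, max_lt_iff]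
    refine ⟨?_, ?_, ?_⟩ <;> rw [abs_of_nonneg (by linarith)] <;> nlinarith [hz.2]
  · rw [hU]
    calc |z ^ 2 - s| ≤ r * (2 * √s + r) := abs_sq_sub_le_of_mem_Icc_sqrt hs_nonneg hr.le hz
      _ < 6 * δ * a * r := by nlinarith

/-- Theorem 1.7(c), lower bound: for `t < 0`, in every neighborhood `V` of the origin the
sublevel sets of `|U_t|` have measure at least `Cε`, so the growth index of `U_t` at the
origin is at most `1`. -/
theorem stmt14 (t : ℝ) (ht : t < 0) :
    ∀ V ∈ nhds (0 : ℝ × ℝ × ℝ), ∃ C : ℝ, 0 < C ∧ ∃ ε₀ : ℝ, 0 < ε₀ ∧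
      ∀ ε : ℝ, 0 < ε → ε < ε₀ →
        ENNReal.ofReal (C * ε) ≤
          volume {p : ℝ × ℝ × ℝ | p ∈ V ∧
            |p.1 ^ 4 + t * p.1 ^ 2 + p.2.1 ^ 2 + p.2.2 ^ 2| < ε} := by
  intro V hV
  obtain ⟨ρ, hρ, hball⟩ := Metric.mem_nhds_iff.mp hV
  set a := √(-t)
  have ha : 0 < a := Real.sqrt_pos.mpr (neg_pos.mpr ht)
  have hat : a ^ 2 = -t := Real.sq_sqrt (neg_nonneg.mpr ht.le)
  set δ := min (a / 4) (ρ / (4 * (1 + a)))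
  have hδ : 0 < δ := lt_min (by positivity) (by positivity)
  have hδρ : 4 * δ * (1 + a) ≤ ρ := by
    have := min_le_right (a / 4) (ρ / (4 * (1 + a)))
    rw [le_div_iff₀ (by positivity)] at this
    linarith
  refine ⟨δ / 12, by positivity, 6 * δ ^ 2 * a ^ 2, by positivity, fun ε hε hεε₀ => ?_⟩
  set r := ε / (6 * δ * a)
  have hr : 0 < r := by positivity
  have hε_eq : ε = 6 * δ * a * r := by simp only [r]; field_simp
  have hra : r < δ * a := by nlinarith
  have hfiber : ∀ x ∈ Icc δ (2 * δ), ∀ y ∈ Icc 0 (δ * a / 2), ENNReal.ofReal r ≤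
      volume {z | (x, y, z) ∈ {p : ℝ × ℝ × ℝ | p ∈ V ∧
        |p.1 ^ 4 + t * p.1 ^ 2 + p.2.1 ^ 2 + p.2.2 ^ 2| < ε}} := by
    intro x hx y hy
    set s := -(x ^ 4 + t * x ^ 2 + y ^ 2)
    calc ENNReal.ofReal r = volume (Icc (√s) (√s + r)) := by
          rw [Real.volume_Icc, add_sub_cancel_left]
      _ ≤ _ := measure_mono fun z hz => by
          obtain ⟨hmem, hU⟩ := mem_ball_and_abs_lt_of_mem_shell hat ha hδ (min_le_left _ _) hr hra hx hy hz
          exact ⟨hball (Metric.ball_subset_ball hδρ hmem), hε_eq ▸ hU⟩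
  calc ENNReal.ofReal (δ / 12 * ε)
      = volume (Icc δ (2 * δ)) * volume (Icc 0 (δ * a / 2)) * ENNReal.ofReal r := by
        rw [Real.volume_Icc, Real.volume_Icc, ← ENNReal.ofReal_mul (by linarith),
          ← ENNReal.ofReal_mul (by nlinarith)]
        congr 1
        rw [hε_eq]; ring
    _ ≤ _ := Measure.mul_mul_le_prod_prod_apply hfiber
end

section
/- For a positive integer $k$, suppose $f$ is a $C^{k+1}$ real-valued function on an interval $I \subset \mathbb{R}$ whose $k$-th derivative satisfies $|f^{(k)}(x)| \ge \eta > 0$ for all $x \in I$. Then there is a constant $C_k$ depending only on $k$ such that for all $\delta > 0$, $|\{x \in I : |f(x)| < \delta\}| \le C_k (\delta/\eta)^{1/k}$. -/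
/-!
The boundary of an interval is null, so it suffices to work on open intervals, where
`iteratedDerivWithin` is `iteratedDeriv`. There one inducts on `k`, with `C_k = 2^{k+1} - 2`.
For `k = 1`, the mean value theorem gives `|f y - f x| ≥ η |y - x|`, so `{|f| ≤ δ}` has diameter
at most `2δ/η`. For `k + 1`, put `g = f⁽ᵏ⁾`, `r = (δ/η)^{1/(k+1)}` and `σ = η r`: the set
`{|g| ≤ σ}` has length at most `2r` by the case `k = 1` applied to `g`, while `g` is monotone
(Darboux), so `{g > σ}` and `{g < -σ}` are intervals on which `|f⁽ᵏ⁾| ≥ σ`, and the induction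
hypothesis bounds their contribution by `C_k (δ/σ)^{1/k} = C_k r` each.
-/

open MeasureTheory Set

lemma mul_abs_sub_le_abs_sub_of_le_abs_deriv {g : ℝ → ℝ} {J : Set ℝ} {η : ℝ}
    (hJ : J.OrdConnected) (hg : ∀ x ∈ J, DifferentiableAt ℝ g x)
    (hg' : ∀ x ∈ J, η ≤ |deriv g x|) {x y : ℝ} (hx : x ∈ J) (hy : y ∈ J) :
    η * |y - x| ≤ |g y - g x| := by
  wlog hxy : x < y generalizing x y
  · rcases (not_lt.1 hxy).eq_or_lt with rfl | hyx
    · simp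
    · rw [abs_sub_comm, abs_sub_comm (g y)]
      exact this hy hx hyx
  have hIcc : Icc x y ⊆ J := hJ.out hx hy
  obtain ⟨c, hc, hslope⟩ := exists_deriv_eq_slope g hxy
    (fun z hz => (hg z (hIcc hz)).continuousAt.continuousWithinAt)
    (fun z hz => (hg z (hIcc (Ioo_subset_Icc_self hz))).differentiableWithinAt)
  have hpos : 0 < y - x := sub_pos.2 hxy
  calc η * |y - x| ≤ |deriv g c| * |y - x| :=
        mul_le_mul_of_nonneg_right (hg' c (hIcc (Ioo_subset_Icc_self hc))) (abs_nonneg _)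
    _ = |g y - g x| := by rw [hslope, ← abs_mul, div_mul_cancel₀ _ hpos.ne']

lemma volume_sep_abs_le_le_of_mul_abs_sub_le {g : ℝ → ℝ} {S : Set ℝ} {η : ℝ} (hη : 0 < η)
    (hg : ∀ x ∈ S, ∀ y ∈ S, η * |y - x| ≤ |g y - g x|) (σ : ℝ) :
    volume {x ∈ S | |g x| ≤ σ} ≤ ENNReal.ofReal (2 * σ / η) := by
  refine (Real.volume_le_diam _).trans (Metric.ediam_le fun x hx y hy => ?_)
  rw [edist_dist, Real.dist_eq, abs_sub_comm]
  refine ENNReal.ofReal_le_ofReal ((le_div_iff₀' hη).2 ?_)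
  calc η * |y - x| ≤ |g y - g x| := hg x hx.1 y hy.1
    _ ≤ |g y| + |g x| := abs_sub _ _
    _ ≤ 2 * σ := by linarith [hx.2, hy.2]

lemma volume_sep_abs_le_le_of_le_abs_deriv {g : ℝ → ℝ} {J : Set ℝ} {η : ℝ} (hη : 0 < η)
    (hJ : J.OrdConnected) (hg : ∀ x ∈ J, DifferentiableAt ℝ g x)
    (hg' : ∀ x ∈ J, η ≤ |deriv g x|) (σ : ℝ) :
    volume {x ∈ J | |g x| ≤ σ} ≤ ENNReal.ofReal (2 * σ / η) :=
  volume_sep_abs_le_le_of_mul_abs_sub_le hη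
    (fun _ hx _ hy => mul_abs_sub_le_abs_sub_of_le_abs_deriv hJ hg hg' hx hy) σ

lemma measure_sep_le_add_add_abs_le {μ : Measure ℝ} {J : Set ℝ} (g : ℝ → ℝ) (σ : ℝ)
    (p : ℝ → Prop) :
    μ {x ∈ J | p x} ≤ μ {x ∈ J ∩ g ⁻¹' Ioi σ | p x} + μ {x ∈ J ∩ g ⁻¹' Iio (-σ) | p x} +
      μ {x ∈ J | |g x| ≤ σ} := by
  refine (measure_mono ?_).trans <|
    (measure_union_le _ _).trans (add_le_add_left (measure_union_le _ _) _)
  rintro x ⟨hxJ, hpx⟩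
  rcases le_or_gt |g x| σ with hle | hgt
  · exact Or.inr ⟨hxJ, hle⟩
  rcases lt_abs.1 hgt with hpos | hneg
  · exact Or.inl (Or.inl ⟨⟨hxJ, hpos⟩, hpx⟩)
  · exact Or.inl (Or.inr ⟨⟨hxJ, show g x < -σ by linarith⟩, hpx⟩)

lemma strictMonoOn_or_strictAntiOn_of_deriv_ne_zero {g : ℝ → ℝ} {J : Set ℝ}
    (hJ : J.OrdConnected) (hg : ∀ x ∈ J, DifferentiableAt ℝ g x)
    (hg' : ∀ x ∈ J, deriv g x ≠ 0) : StrictMonoOn g J ∨ StrictAntiOn g J := by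
  have hcont : ContinuousOn g J := fun x hx => (hg x hx).continuousAt.continuousWithinAt
  rcases hasDerivWithinAt_forall_lt_or_forall_gt_of_forall_ne hJ.convex
    (fun x hx => (hg x hx).hasDerivAt.hasDerivWithinAt) hg' with hneg | hpos
  · exact Or.inr (strictAntiOn_of_deriv_neg hJ.convex hcont fun x hx => hneg x (interior_subset hx))
  · exact Or.inl (strictMonoOn_of_deriv_pos hJ.convex hcont fun x hx => hpos x (interior_subset hx))

lemma Set.OrdConnected.inter_preimage_of_monotoneOn_or_antitoneOn {α β : Type*}
    [Preorder α] [Preorder β] {J : Set α} {g : α → β} {s : Set β} (hJ : J.OrdConnected)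
    (hg : MonotoneOn g J ∨ AntitoneOn g J) (hs : s.OrdConnected) :
    (J ∩ g ⁻¹' s).OrdConnected := by
  obtain ⟨u, hu, heq⟩ := hg.elim hs.preimage_monotoneOn hs.preimage_antitoneOn
  exact heq ▸ hJ.inter hu

lemma ContDiffOn.differentiableOn_iteratedDeriv_of_isOpen {f : ℝ → ℝ} {J : Set ℝ}
    {n : WithTop ℕ∞} {m : ℕ} (hf : ContDiffOn ℝ n f J) (hJ : IsOpen J) (hmn : m < n) :
    DifferentiableOn ℝ (iteratedDeriv m f) J :=
  (hf.differentiableOn_iteratedDerivWithin hmn hJ.uniqueDiffOn).congr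
    fun _ hx => (iteratedDerivWithin_of_isOpen hJ hx).symm

lemma Set.OrdConnected.volume_sep_le_volume_sep_interior {I : Set ℝ} (hI : I.OrdConnected)
    (p : ℝ → Prop) : volume {x ∈ I | p x} ≤ volume {x ∈ interior I | p x} := by
  refine measure_mono_ae (ae_le_set.2 (measure_mono_null ?_ (hI.convex.addHaar_frontier volume)))
  rintro x ⟨⟨hxI, hpx⟩, hx⟩
  exact ⟨subset_closure hxI, fun hxint => hx ⟨hxint, hpx⟩⟩

lemma div_rpow_one_div_add_one_rpow_one_div {a : ℝ} (ha : 0 < a) {k : ℕ} (hk : k ≠ 0) :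
    (a / a ^ (1 / ((k : ℝ) + 1))) ^ (1 / (k : ℝ)) = a ^ (1 / ((k : ℝ) + 1)) := by
  have hk' : (k : ℝ) ≠ 0 := Nat.cast_ne_zero.2 hk
  have hsub : a / a ^ (1 / ((k : ℝ) + 1)) = a ^ (1 - 1 / ((k : ℝ) + 1)) := by
    rw [Real.rpow_sub ha, Real.rpow_one]
  rw [hsub, ← Real.rpow_mul ha.le]
  congr 1
  field_simp
  ring

theorem volume_sep_abs_lt_le_of_isOpen {k : ℕ} (hk : 1 ≤ k) {f : ℝ → ℝ} {J : Set ℝ} {η : ℝ}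
    (hJo : IsOpen J) (hJ : J.OrdConnected) (hη : 0 < η) (hf : ContDiffOn ℝ k f J)
    (hfk : ∀ x ∈ J, η ≤ |iteratedDeriv k f x|) {δ : ℝ} (hδ : 0 < δ) :
    volume {x ∈ J | |f x| < δ} ≤
      ENNReal.ofReal ((2 ^ (k + 1) - 2) * (δ / η) ^ (1 / (k : ℝ))) := by
  induction k, hk using Nat.le_induction generalizing f J η with
  | base =>
    have hf' : ∀ x ∈ J, η ≤ |deriv f x| := by simpa only [iteratedDeriv_one] using hfk
    have hfd : ∀ x ∈ J, DifferentiableAt ℝ f x := fun x hx =>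
      (hf.differentiableOn one_ne_zero).differentiableAt (hJo.mem_nhds hx)
    calc volume {x ∈ J | |f x| < δ} ≤ volume {x ∈ J | |f x| ≤ δ} :=
          measure_mono fun x hx => ⟨hx.1, hx.2.le⟩
      _ ≤ ENNReal.ofReal (2 * δ / η) := volume_sep_abs_le_le_of_le_abs_deriv hη hJ hfd hf' δ
      _ = _ := by congr 1; norm_num [mul_div_assoc]
  | succ k hk ih =>
    set g := iteratedDeriv k f
    have hgd : DifferentiableOn ℝ g J :=
      hf.differentiableOn_iteratedDeriv_of_isOpen hJo (by exact_mod_cast k.lt_succ_self)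
    have hgd' : ∀ x ∈ J, DifferentiableAt ℝ g x := fun x hx =>
      hgd.differentiableAt (hJo.mem_nhds hx)
    have hg' : ∀ x ∈ J, η ≤ |deriv g x| := by simpa only [iteratedDeriv_succ] using hfk
    have hmono : MonotoneOn g J ∨ AntitoneOn g J :=
      (strictMonoOn_or_strictAntiOn_of_deriv_ne_zero hJ hgd' fun x hx =>
        abs_pos.1 (hη.trans_le (hg' x hx))).imp StrictMonoOn.monotoneOn StrictAntiOn.antitoneOn
    push_cast
    set r := (δ / η) ^ (1 / ((k : ℝ) + 1))
    have hr : 0 < r := by positivity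
    have hC : (2 : ℝ) ≤ 2 ^ (k + 1) := le_self_pow₀ (by norm_num) (by omega)
    have hpiece : ∀ s : Set ℝ, IsOpen s → s.OrdConnected → (∀ y ∈ s, η * r ≤ |y|) →
        volume {x ∈ J ∩ g ⁻¹' s | |f x| < δ} ≤ ENNReal.ofReal ((2 ^ (k + 1) - 2) * r) := by
      intro s hso hs hsr
      have := ih (hgd.continuousOn.isOpen_inter_preimage hJo hso)
        (hJ.inter_preimage_of_monotoneOn_or_antitoneOn hmono hs) (by positivity)
        ((hf.of_le (by exact_mod_cast k.le_succ)).mono inter_subset_left)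
        (fun x hx => hsr _ hx.2)
      rwa [← div_div, div_rpow_one_div_add_one_rpow_one_div (div_pos hδ hη) (by omega)] at this
    have hmid : volume {x ∈ J | |g x| ≤ η * r} ≤ ENNReal.ofReal (2 * r) := by
      have := volume_sep_abs_le_le_of_le_abs_deriv hη hJ hgd' hg' (η * r)
      rwa [mul_div_assoc, mul_div_cancel_left₀ _ hη.ne'] at this
    calc volume {x ∈ J | |f x| < δ}
        ≤ volume {x ∈ J ∩ g ⁻¹' Ioi (η * r) | |f x| < δ} +
            volume {x ∈ J ∩ g ⁻¹' Iio (-(η * r)) | |f x| < δ} +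
            volume {x ∈ J | |g x| ≤ η * r} := measure_sep_le_add_add_abs_le g (η * r) _
      _ ≤ ENNReal.ofReal ((2 ^ (k + 1) - 2) * r) + ENNReal.ofReal ((2 ^ (k + 1) - 2) * r) +
            ENNReal.ofReal (2 * r) := by
          gcongr
          · exact hpiece _ isOpen_Ioi ordConnected_Ioi fun y hy => hy.le.trans (le_abs_self y)
          · exact hpiece _ isOpen_Iio ordConnected_Iio fun y hy =>
              le_abs.2 (Or.inr (by linarith [mem_Iio.1 hy]))
      _ = ENNReal.ofReal ((2 ^ (k + 1 + 1) - 2) * r) := by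
          rw [← ENNReal.ofReal_add (by nlinarith) (by nlinarith),
            ← ENNReal.ofReal_add (by nlinarith) (by positivity)]
          congr 1
          ring

/-- The van der Corput-type sublevel set estimate (2.1) of Christ: if `f` is `C^{k+1}` on an
interval `I` and `|f^{(k)}| ≥ η > 0` on `I`, then
`|{x ∈ I : |f x| < δ}| ≤ C_k (δ/η)^{1/k}` with `C_k` depending only on `k`. -/
theorem stmt15 (k : ℕ) (hk : 1 ≤ k) :
    ∃ C : ℝ, 0 < C ∧ ∀ (f : ℝ → ℝ) (I : Set ℝ) (η : ℝ), I.OrdConnected → 0 < η →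
      ContDiffOn ℝ (k + 1) f I →
      (∀ x ∈ I, η ≤ |iteratedDerivWithin k f I x|) →
      ∀ δ : ℝ, 0 < δ →
        volume {x ∈ I | |f x| < δ} ≤ ENNReal.ofReal (C * (δ / η) ^ (1 / (k:ℝ))) := by
  have hC : (2 : ℝ) ^ 2 ≤ 2 ^ (k + 1) := pow_le_pow_right₀ (by norm_num) (by omega)
  refine ⟨2 ^ (k + 1) - 2, by linarith, fun f I η hI hη hf hfk δ hδ => ?_⟩
  have hfk' : ∀ x ∈ interior I, η ≤ |iteratedDeriv k f x| := fun x hx => by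
    rw [← iteratedDerivWithin_eq_iteratedDeriv (uniqueDiffOn_convex hI.convex ⟨x, hx⟩)
      ((hf.contDiffAt (mem_interior_iff_mem_nhds.1 hx)).of_le (by exact_mod_cast k.le_succ))
      (interior_subset hx)]
    exact hfk x (interior_subset hx)
  exact (hI.volume_sep_le_volume_sep_interior _).trans <|
    volume_sep_abs_lt_le_of_isOpen hk isOpen_interior hI.convex.interior.ordConnected hη
      ((hf.of_le (by exact_mod_cast k.le_succ)).mono interior_subset) hfk' hδ
end

section
/- Let $d > 0$, $n \ge 2$, $0 \le k \le n-1$, $a = 1/d$, $\mu > 0$ small, and $q \ge 0$ an integer. Then the scaled integral $\epsilon^{1/d}\int_{(1,\epsilon^{-\mu})^{n-k}} (\ln(\sigma_1\cdots\sigma_{n-k}))^q \,\frac{1}{\sigma_1\cdots\sigma_{n-k}}\,d\sigma$ is bounded below by $C\,|\ln\epsilon|^{q+n-k}\,\epsilon^{1/d}$ for some constant $C > 0$ and all sufficiently small $\epsilon > 0$. -/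
/-!
On the box `(1, T)^m` every `ln σᵢ` is nonnegative, so `ln (σ₁⋯σₘ) = ∑ ln σᵢ ≥ ln σ_{i₀}` and the
integrand dominates `(ln σ_{i₀})^q ∏ σᵢ⁻¹`. By Fubini the integral of the latter is
`∫₁ᵀ (ln s)^q ds/s · (∫₁ᵀ ds/s)^{m-1} = (ln T)^{q+m} / (q+1)`, and `ln T = μ |ln ε|` for `T = ε^{-μ}`.
-/

open MeasureTheory Set Real

theorem setIntegral_univ_pi_prod_eq_prod {ι 𝕜 : Type*} [Fintype ι] [RCLike 𝕜] {E : ι → Type*}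
    [∀ i, MeasureSpace (E i)] [∀ i, SigmaFinite (volume : Measure (E i))]
    (s : (i : ι) → Set (E i)) (f : (i : ι) → E i → 𝕜) :
    ∫ x in univ.pi s, ∏ i, f i (x i) = ∏ i, ∫ y in s i, f i y := by
  rw [volume_pi, Measure.restrict_pi_pi, integral_fintype_prod_eq_prod]

theorem integral_log_pow_mul_inv {a b : ℝ} (q : ℕ) (h : (0 : ℝ) ∉ uIcc a b) :
    ∫ x in a..b, log x ^ q * x⁻¹ = (log b ^ (q + 1) - log a ^ (q + 1)) / (q + 1) := by
  have h_ne : ∀ x ∈ uIcc a b, x ≠ 0 := fun x hx hx0 => h (hx0 ▸ hx)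
  rw [← integral_pow]
  exact intervalIntegral.integral_comp_mul_deriv (fun x hx => hasDerivAt_log (h_ne x hx))
    (continuousOn_inv₀.mono fun x hx => h_ne x hx) (continuous_pow q)

theorem setIntegral_Ioo_one_log_pow_mul_inv (q : ℕ) {T : ℝ} (hT : 1 ≤ T) :
    ∫ x in Ioo 1 T, log x ^ q * x⁻¹ = log T ^ (q + 1) / (q + 1) := by
  have h_zero : (0 : ℝ) ∉ uIcc 1 T := by
    rw [uIcc_of_le hT]
    exact fun h => by linarith [h.1]
  rw [← integral_Ioc_eq_integral_Ioo, ← intervalIntegral.integral_of_le hT,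
    integral_log_pow_mul_inv q h_zero]
  simp

theorem log_le_log_prod {ι : Type*} [Fintype ι] {σ : ι → ℝ} (hσ : ∀ i, 1 ≤ σ i) (i : ι) :
    log (σ i) ≤ log (∏ j, σ j) := by
  rw [log_prod fun j _ => (zero_lt_one.trans_le (hσ j)).ne']
  exact Finset.single_le_sum (fun j _ => log_nonneg (hσ j)) (Finset.mem_univ i)

theorem integrableOn_log_prod_pow_mul_inv {ι : Type*} [Fintype ι] (q : ℕ) (T : ℝ) :
    IntegrableOn (fun σ : ι → ℝ => log (∏ i, σ i) ^ q * (∏ i, σ i)⁻¹)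
      (univ.pi fun _ => Icc 1 T) := by
  have h_ne : ∀ σ ∈ univ.pi fun _ : ι => Icc (1 : ℝ) T, ∏ i, σ i ≠ 0 := fun σ hσ =>
    (zero_lt_one.trans_le (Finset.one_le_prod fun i _ => (hσ i (mem_univ i)).1)).ne'
  refine ContinuousOn.integrableOn_compact (isCompact_univ_pi fun _ => isCompact_Icc) ?_
  fun_prop (disch := exact h_ne)

theorem log_pow_mul_prod_inv_le {ι : Type*} [Fintype ι] {σ : ι → ℝ} (hσ : ∀ i, 1 ≤ σ i)
    (i : ι) (q : ℕ) :
    log (σ i) ^ q * ∏ j, (σ j)⁻¹ ≤ log (∏ j, σ j) ^ q * (∏ j, σ j)⁻¹ := by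
  rw [Finset.prod_inv_distrib]
  exact mul_le_mul_of_nonneg_right (pow_le_pow_left₀ (log_nonneg (hσ i)) (log_le_log_prod hσ i) q)
    (inv_nonneg.2 (Finset.prod_nonneg fun j _ => zero_le_one.trans (hσ j)))

theorem log_pow_add_card_div_le_setIntegral_log_prod_pow_mul_inv {ι : Type*} [Fintype ι]
    [Nonempty ι] (q : ℕ) {T : ℝ} (hT : 1 ≤ T) :
    log T ^ (q + Fintype.card ι) / (q + 1) ≤
      ∫ σ in univ.pi fun _ : ι => Ioo 1 T, log (∏ i, σ i) ^ q * (∏ i, σ i)⁻¹ := by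
  classical
  obtain ⟨i₀⟩ := ‹Nonempty ι›
  set e : ι → ℕ := Pi.single i₀ q
  have h_prod_log : ∀ σ : ι → ℝ,
      ∏ i, log (σ i) ^ e i * (σ i)⁻¹ = log (σ i₀) ^ q * ∏ i, (σ i)⁻¹ := fun σ => by
    rw [Finset.prod_mul_distrib, Finset.prod_eq_single i₀ (fun i _ hi => by simp [e, hi])
      (by simp)]
    simp [e]
  have h_box : ∫ σ in univ.pi fun _ : ι => Ioo 1 T, ∏ i, log (σ i) ^ e i * (σ i)⁻¹ =
      log T ^ (q + Fintype.card ι) / (q + 1) := by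
    rw [setIntegral_univ_pi_prod_eq_prod (fun _ => Ioo 1 T) fun i x => log x ^ e i * x⁻¹]
    simp_rw [setIntegral_Ioo_one_log_pow_mul_inv _ hT]
    rw [Finset.prod_div_distrib, Finset.prod_pow_eq_pow_sum]
    congr 2
    · simp [e, Finset.sum_add_distrib]
    · rw [Finset.prod_eq_single i₀ (fun i _ hi => by simp [e, hi]) (by simp)]
      simp [e]
  rw [← h_box]
  have h_ae : ∀ᵐ σ ∂volume.restrict (univ.pi fun _ : ι => Ioo 1 T), ∀ i, 1 ≤ σ i :=
    ae_restrict_of_forall_mem (MeasurableSet.univ_pi fun _ => measurableSet_Ioo)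
      fun σ hσ i => (hσ i (mem_univ i)).1.le
  refine integral_mono_of_nonneg ?_ ?_ ?_
  · filter_upwards [h_ae] with σ hσ
    rw [Pi.zero_apply, h_prod_log]
    exact mul_nonneg (pow_nonneg (log_nonneg (hσ i₀)) q)
      (Finset.prod_nonneg fun i _ => inv_nonneg.2 (zero_le_one.trans (hσ i)))
  · exact (integrableOn_log_prod_pow_mul_inv q T).mono_set
      (pi_mono fun _ _ => Ioo_subset_Icc_self)
  · filter_upwards [h_ae] with σ hσ
    rw [h_prod_log]
    exact log_pow_mul_prod_inv_le hσ i₀ q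

theorem stmt19_general {n k : ℕ} (hn : 2 ≤ n) (hk : k ≤ n - 1)
    (d : ℝ) (μ : ℝ) (hμ : 0 < μ) (q : ℕ) :
    ∃ C : ℝ, 0 < C ∧ ∃ ε₀ : ℝ, 0 < ε₀ ∧ ε₀ < 1 ∧ ∀ ε : ℝ, 0 < ε → ε < ε₀ →
      C * |Real.log ε| ^ (q + (n - k)) * ε ^ (1 / d) ≤
        ε ^ (1 / d) *
          ∫ σ in {σ : Fin (n - k) → ℝ | ∀ i, σ i ∈ Set.Ioo (1:ℝ) (ε ^ (-μ))},
            (Real.log (∏ i, σ i)) ^ q * (∏ i, σ i)⁻¹ := by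
  have : Nonempty (Fin (n - k)) := ⟨⟨0, by omega⟩⟩
  refine ⟨μ ^ (q + (n - k)) / (q + 1), by positivity, 1 / 2, by norm_num, by norm_num,
    fun ε hε hε₀ => ?_⟩
  have hε₁ : ε < 1 := by linarith
  have hT : 1 ≤ ε ^ (-μ) := one_le_rpow_of_pos_of_le_one_of_nonpos hε hε₁.le (by linarith)
  have h_log : log (ε ^ (-μ)) = μ * |log ε| := by
    rw [log_rpow hε, abs_of_neg (log_neg hε hε₁)]
    ring
  have h_box : {σ : Fin (n - k) → ℝ | ∀ i, σ i ∈ Ioo 1 (ε ^ (-μ))} =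
      univ.pi fun _ => Ioo 1 (ε ^ (-μ)) := by
    ext
    simp
  have h_int := log_pow_add_card_div_le_setIntegral_log_prod_pow_mul_inv (ι := Fin (n - k)) q hT
  rw [Fintype.card_fin, h_log, mul_pow, ← h_box] at h_int
  rw [mul_comm (ε ^ (1 / d))]
  exact mul_le_mul_of_nonneg_right (le_of_eq_of_le (by ring) h_int) (rpow_nonneg hε.le _)

/-- The computation (3.25)–(3.26) in the proof of Theorem 1.4(b): the scaled integral
`ε^{1/d} ∫_{(1,ε^{-μ})^{n-k}} (ln(σ₁⋯σ_{n-k}))^q / (σ₁⋯σ_{n-k}) dσ` is bounded below by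
`C |ln ε|^{q+n-k} ε^{1/d}` for small `ε`. -/
theorem stmt19 {n k : ℕ} (hn : 2 ≤ n) (hk : k ≤ n - 1)
    (d : ℝ) (hd : 0 < d) (μ : ℝ) (hμ : 0 < μ) (q : ℕ) :
    ∃ C : ℝ, 0 < C ∧ ∃ ε₀ : ℝ, 0 < ε₀ ∧ ε₀ < 1 ∧ ∀ ε : ℝ, 0 < ε → ε < ε₀ →
      C * |Real.log ε| ^ (q + (n - k)) * ε ^ (1 / d) ≤
        ε ^ (1 / d) *
          ∫ σ in {σ : Fin (n - k) → ℝ | ∀ i, σ i ∈ Set.Ioo (1:ℝ) (ε ^ (-μ))},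
            (Real.log (∏ i, σ i)) ^ q * (∏ i, σ i)⁻¹ :=
  stmt19_general hn hk d μ hμ q
end
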